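/- (Theorem 4.2, first part) Let X₁, X₂, … be an infinite sequence of independent random points, each uniformly distributed on the unit sphere S² ⊂ ℝ³. Fix c > 0 and α ∈ (0,1), and for each N with c/N^α < 1 set p_N = c/N^α and a_N = 2·arcsin(√p_N). Let |𝓔_N| be the number of edges of the random intersection graph G_N on vertex set {1,…,N} built from X₁,…,X_N with caps of angular radius a_N. Then almost surely, for all sufficiently large N, 2·|𝓔_N| ≥ N, i.e., G_N has at least N/2 edges. -/

import Mathlib

open MeasureTheory Real Set
open scoped ENNReal RealInnerProductSpace

/-- The unit sphere `S²` in `ℝ³`. -/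
noncomputable def S2 : Set (EuclideanSpace ℝ (Fin 3)) :=
  Metric.sphere (0 : EuclideanSpace ℝ (Fin 3)) 1

/-- The uniform probability measure on the unit sphere `S² ⊂ ℝ³`: the rotation-invariant
surface (2-dimensional Hausdorff) measure restricted to the sphere, normalized by the total
surface area `4π`. -/
noncomputable def sphereUniform : Measure (EuclideanSpace ℝ (Fin 3)) :=
  (ENNReal.ofReal (4 * π))⁻¹ •
    (μH[2] : Measure (EuclideanSpace ℝ (Fin 3))).restrict S2

/-- The angular distance `θ(x,y) = arccos ⟪x,y⟫` between two points of the sphere. -/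
noncomputable def angDist (x y : EuclideanSpace ℝ (Fin 3)) : ℝ :=
  Real.arccos ⟪x, y⟫

/-! Let `p = c / N ^ α`. A maximal `√p`-separated subset of `S²` has at most `32 / p` points,
since disjoint balls of radius `√p / 2` around them fit in a thin shell around `S²`; it is a
`√p`-net, and as the net balls have equal measure and cover `S²`, each has measure `≥ p / 32`. If
some `X_i` has no other sample point within distance `2 √p`, then the other `N - 1` points all miss
the net ball containing `X_i`; a union bound gives probability at most
`(32 / p) N (1 - p / 32) ^ (N - 1) ≲ N ^ (1 + α) exp (-c N ^ (1 - α) / 64)`, which is summable.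
By Borel–Cantelli, almost surely for large `N` every vertex has a neighbour at angular distance
`≤ a_N`, and a graph without isolated vertices on `N` vertices has at least `N / 2` edges. -/

open Metric Filter ProbabilityTheory Topology
open scoped NNReal

local notation "E3" => EuclideanSpace ℝ (Fin 3)

lemma arccos_inner_le_two_mul_arcsin {E : Type*} [NormedAddCommGroup E] [InnerProductSpace ℝ E]
    {x y : E} (hx : ‖x‖ = 1) (hy : ‖y‖ = 1) {r : ℝ} (hxy : dist x y ≤ 2 * r) :
    arccos ⟪x, y⟫ ≤ 2 * arcsin r := by
  have hr0 : 0 ≤ r := by linarith [dist_nonneg (x := x) (y := y)]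
  rcases lt_or_ge 1 r with hr1 | hr1
  · rw [arcsin_of_one_le hr1.le]
    linarith [arccos_le_pi ⟪x, y⟫]
  have hcos : cos (2 * arcsin r) ≤ ⟪x, y⟫ := by
    have hnorm : ‖x - y‖ ^ 2 = 2 - 2 * ⟪x, y⟫ := by rw [norm_sub_sq_real, hx, hy]; ring
    have hdist : ‖x - y‖ ^ 2 ≤ (2 * r) ^ 2 := by
      rw [← dist_eq_norm]; exact pow_le_pow_left₀ dist_nonneg hxy 2
    rw [cos_two_mul, cos_sq', sin_arcsin (by linarith) hr1]
    linarith
  calc arccos ⟪x, y⟫ ≤ arccos (cos (2 * arcsin r)) := arccos_le_arccos hcos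
    _ = 2 * arcsin r :=
      arccos_cos (by linarith [arcsin_nonneg.2 hr0]) (by linarith [arcsin_le_pi_div_two r])

lemma angDist_comm (x y : E3) : angDist x y = angDist y x := by
  rw [angDist, angDist, real_inner_comm]

lemma le_two_mul_ncard_of_forall_exists_ne {R : ℕ → ℕ → Prop} (hR : ∀ i j, R i j → R j i) {N : ℕ}
    (h : ∀ i < N, ∃ j < N, j ≠ i ∧ R i j) :
    N ≤ 2 * {q : ℕ × ℕ | q.1 < q.2 ∧ q.2 < N ∧ R q.1 q.2}.ncard := by
  classical
  choose! nb hnb_lt hnb_ne hnb using h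
  set edges := {q ∈ Finset.range N ×ˢ Finset.range N | q.1 < q.2 ∧ R q.1 q.2}
  have hedges : {q : ℕ × ℕ | q.1 < q.2 ∧ q.2 < N ∧ R q.1 q.2} = ↑edges := by
    ext q
    simp only [edges, Finset.coe_filter, Finset.mem_product, Finset.mem_range, mem_ofPred_eq]
    exact ⟨fun ⟨h1, h2, h3⟩ => ⟨⟨h1.trans h2, h2⟩, h1, h3⟩, fun ⟨⟨_, h2⟩, h1, h3⟩ => ⟨h1, h2, h3⟩⟩
  let edgeAt : ℕ → ℕ × ℕ := fun i => (min i (nb i), max i (nb i))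
  have hmaps : ∀ i ∈ Finset.range N, edgeAt i ∈ edges := by
    intro i hi
    rw [Finset.mem_range] at hi
    simp only [edges, edgeAt, Finset.mem_filter, Finset.mem_product, Finset.mem_range]
    rcases lt_or_gt_of_ne (hnb_ne i hi) with hlt | hlt
    · simp [min_eq_right hlt.le, max_eq_left hlt.le, hlt, hi, hnb_lt i hi, hR _ _ (hnb i hi)]
    · simp [min_eq_left hlt.le, max_eq_right hlt.le, hlt, hi, hnb_lt i hi, hnb i hi]
  have hfiber : ∀ q ∈ edges, {i ∈ Finset.range N | edgeAt i = q}.card ≤ 2 := by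
    intro q _
    calc {i ∈ Finset.range N | edgeAt i = q}.card ≤ ({q.1, q.2} : Finset ℕ).card := by
          refine Finset.card_le_card fun i hi => ?_
          obtain ⟨-, rfl⟩ := Finset.mem_filter.1 hi
          rcases le_total i (nb i) with hle | hle <;> simp [edgeAt, hle]
      _ ≤ 2 := Finset.card_le_two
  simpa [hedges] using Finset.card_le_mul_card_image_of_maps_to hmaps 2 hfiber

lemma volume_closedBall_diff_ball_le {u : ℝ} (hu0 : 0 ≤ u) (hu1 : u ≤ 1) :
    volume (closedBall (0 : E3) (1 + u) \ ball 0 (1 - u))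
      ≤ ENNReal.ofReal (8 * u) * volume (ball (0 : E3) 1) := by
  rw [measure_sdiff (ball_subset_closedBall.trans (closedBall_subset_closedBall (by linarith)))
      measurableSet_ball.nullMeasurableSet measure_ball_lt_top.ne,
    Measure.addHaar_closedBall volume _ (by linarith : (0 : ℝ) ≤ 1 + u),
    Measure.addHaar_ball volume _ (by linarith : (0 : ℝ) ≤ 1 - u), finrank_euclideanSpace_fin,
    ← ENNReal.sub_mul fun _ _ => measure_ball_lt_top.ne,
    ← ENNReal.ofReal_sub _ (pow_nonneg (by linarith) 3)]
  gcongr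
  nlinarith [mul_nonneg hu0 (by nlinarith : 0 ≤ 1 - u ^ 2)]

lemma card_mul_sq_le_of_subset_S2_of_isSeparated {ε : ℝ≥0} (hε : ε ≤ 1) {T : Finset E3}
    (hT : ↑T ⊆ S2) (hsep : IsSeparated ε (T : Set E3)) : (T.card : ℝ) * ε ^ 2 ≤ 32 := by
  rcases eq_zero_or_pos ε with rfl | hε0
  · simp
  set u : ℝ := ε / 2 with hu
  have hu0 : 0 < u := by positivity
  have hu1 : u ≤ 1 / 2 := by rw [hu]; linarith [NNReal.coe_le_coe.2 hε, NNReal.coe_one]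
  have hdisj : (T : Set E3).PairwiseDisjoint fun y => closedBall y u := by
    intro x hx y hy hxy
    refine closedBall_disjoint_closedBall ?_
    have : (ε : ℝ≥0∞) < edist x y := hsep hx hy hxy
    rw [edist_dist, ← ENNReal.ofReal_coe_nnreal, ENNReal.ofReal_lt_ofReal_iff_of_nonneg
      ε.coe_nonneg] at this
    linarith
  have hshell_sub : (⋃ y ∈ T, closedBall y u) ⊆ closedBall 0 (1 + u) \ ball 0 (1 - u) := by
    simp only [iUnion_subset_iff]
    intro y hy z hz
    have hy1 : dist y 0 = 1 := mem_sphere.1 (hT hy)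
    have hzy : dist z y ≤ u := mem_closedBall.1 hz
    refine ⟨mem_closedBall.2 ?_, fun h => ?_⟩
    · linarith [dist_triangle z y 0]
    · linarith [mem_ball.1 h, dist_triangle y z 0, dist_comm z y]
  have hballs : volume (⋃ y ∈ T, closedBall y u)
      = T.card * (ENNReal.ofReal (u ^ 3) * volume (ball (0 : E3) 1)) := by
    rw [measure_biUnion_finset hdisj fun y _ => measurableSet_closedBall]
    simp [Measure.addHaar_closedBall volume _ hu0.le]
  have hcard : (T.card : ℝ≥0∞) * ENNReal.ofReal (u ^ 3) ≤ ENNReal.ofReal (8 * u) := by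
    have := (hballs ▸ measure_mono hshell_sub).trans
      (volume_closedBall_diff_ball_le hu0.le (by linarith))
    rwa [← mul_assoc, ENNReal.mul_le_mul_iff_left (measure_ball_pos _ _ one_pos).ne'
      measure_ball_lt_top.ne] at this
  rw [← ENNReal.ofReal_natCast, ← ENNReal.ofReal_mul (by positivity),
    ENNReal.ofReal_le_ofReal_iff (by positivity)] at hcard
  have : (ε : ℝ) = 2 * u := by rw [hu]; ring
  rw [this]
  nlinarith [pow_pos hu0 2]

lemma packingNumber_S2_ne_top {ε : ℝ≥0} (hε0 : 0 < ε) (hε1 : ε ≤ 1) :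
    packingNumber ε S2 ≠ ⊤ := by
  refine ne_top_of_le_ne_top (ENat.natCast_ne_top ⌊32 / (ε : ℝ) ^ 2⌋₊) ?_
  refine iSup₂_le fun C hC => iSup_le fun hsep => ?_
  by_contra! hlarge
  obtain ⟨D, hDC, hD⟩ := exists_subset_encard_eq (Order.add_one_le_of_lt hlarge)
  have hDfin : D.Finite := finite_of_encard_eq_coe hD
  have hcard := card_mul_sq_le_of_subset_S2_of_isSeparated hε1 (T := hDfin.toFinset)
    (by simpa using hDC.trans hC) (by simpa using hsep.subset hDC)
  rw [hDfin.encard_eq_coe_toFinset_card] at hD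
  norm_cast at hD
  rw [hD, ← le_div_iff₀ (by positivity)] at hcard
  exact (Nat.lt_floor_add_one _).not_ge (by exact_mod_cast hcard)

lemma exists_finset_cover_S2 {s : ℝ} (hs0 : 0 < s) (hs1 : s ≤ 1) :
    ∃ T : Finset E3, ↑T ⊆ S2 ∧ S2 ⊆ ⋃ y ∈ T, closedBall y s ∧ (T.card : ℝ) * s ^ 2 ≤ 32 := by
  lift s to ℝ≥0 using hs0.le
  have hpack := packingNumber_S2_ne_top (ε := s) (by exact_mod_cast hs0) (by exact_mod_cast hs1)
  have hfin : (maximalSeparatedSet s S2).Finite :=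
    encard_ne_top_iff.1 (encard_maximalSeparatedSet hpack ▸ hpack)
  refine ⟨hfin.toFinset, by simpa using maximalSeparatedSet_subset, ?_,
    card_mul_sq_le_of_subset_S2_of_isSeparated (by exact_mod_cast hs1)
      (by simpa using maximalSeparatedSet_subset) (by simpa using isSeparated_maximalSeparatedSet)⟩
  simpa using isCover_iff_subset_iUnion_closedBall.1 (isCover_maximalSeparatedSet hpack)

lemma sphereUniform_ae_mem_S2 : ∀ᵐ x ∂sphereUniform, x ∈ S2 :=
  Measure.ae_smul_measure (ae_restrict_mem isClosed_sphere.measurableSet) _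

/-- The reflection exchanging `y` and `z` preserves `S²` and `μH[2]`. -/
lemma sphereUniform_closedBall_eq {y z : E3} (hy : y ∈ S2) (hz : z ∈ S2) (s : ℝ) :
    sphereUniform (closedBall y s) = sphereUniform (closedBall z s) := by
  have hnorm : ‖y‖ = ‖z‖ := by
    rw [mem_sphere_zero_iff_norm.1 hy, mem_sphere_zero_iff_norm.1 hz]
  set f := (ℝ ∙ (y - z))ᗮ.reflection
  have himage : f '' (closedBall y s ∩ S2) = closedBall z s ∩ S2 := by
    rw [image_inter f.injective, f.image_closedBall, Submodule.reflection_sub hnorm, S2,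
      f.image_sphere, map_zero]
  simp only [sphereUniform, Measure.smul_apply, Measure.restrict_apply measurableSet_closedBall,
    ← himage, f.isometry.hausdorffMeasure_image (Or.inl zero_le_two)]

lemma le_sphereUniform_real_closedBall [IsProbabilityMeasure sphereUniform] {s : ℝ} (hs0 : 0 < s)
    (hs1 : s ≤ 1) {y : E3} (hy : y ∈ S2) : s ^ 2 / 32 ≤ sphereUniform.real (closedBall y s) := by
  obtain ⟨T, hTS, hcover, hcard⟩ := exists_finset_cover_S2 hs0 hs1
  have hone : 1 ≤ T.card * sphereUniform.real (closedBall y s) := calc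
    1 = sphereUniform.real univ := probReal_univ.symm
    _ ≤ sphereUniform.real (⋃ z ∈ T, closedBall z s) :=
      ENNReal.toReal_mono (measure_ne_top _ _)
        (measure_mono_ae (sphereUniform_ae_mem_S2.mono fun x hx _ => hcover hx))
    _ ≤ ∑ z ∈ T, sphereUniform.real (closedBall z s) := measureReal_biUnion_finset_le _ _
    _ = T.card * sphereUniform.real (closedBall y s) := by
      simp only [measureReal_def, Finset.sum_congr rfl fun z hz =>
        congrArg ENNReal.toReal (sphereUniform_closedBall_eq (hTS hz) hy s), Finset.sum_const,
        nsmul_eq_mul]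
  nlinarith [measureReal_nonneg (μ := sphereUniform) (s := closedBall y s)]

section Sampling

variable {Ω α : Type*} [MeasurableSpace Ω] [MeasurableSpace α] {P : Measure Ω} {μ : Measure α}

lemma ProbabilityTheory.iIndepFun.measureReal_biInter_preimage_eq_pow {ι : Type*}
    {X : ι → Ω → α} (hindep : iIndepFun X P) (hX : ∀ i, AEMeasurable (X i) P)
    (hdist : ∀ i, P.map (X i) = μ) (S : Finset ι)
    {D : Set α} (hD : MeasurableSet D) : P.real (⋂ i ∈ S, X i ⁻¹' D) = μ.real D ^ S.card := by
  rw [measureReal_def, hindep.measure_inter_preimage_eq_mul S fun _ _ => hD,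
    Finset.prod_congr rfl fun i _ => by
      rw [← Measure.map_apply_of_aemeasurable (hX i) hD, hdist i],
    Finset.prod_const, ENNReal.toReal_pow, measureReal_def]

lemma measureReal_exists_all_but_one_notMem_le [IsProbabilityMeasure μ] {X : ℕ → Ω → α}
    (hindep : iIndepFun X P)
    (hX : ∀ i, AEMeasurable (X i) P) (hdist : ∀ i, P.map (X i) = μ) {β : Type*} (T : Finset β)
    {C : β → Set α} (hC : ∀ y, MeasurableSet (C y)) {q : ℝ} (hq : ∀ y ∈ T, q ≤ μ.real (C y))
    (N : ℕ) :
    P.real (⋃ y ∈ T, ⋃ i ∈ Finset.range N, ⋂ j ∈ Finset.range N \ {i}, X j ⁻¹' (C y)ᶜ)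
      ≤ T.card * N * (1 - q) ^ (N - 1) := by
  have hmiss : ∀ y ∈ T, ∀ i ∈ Finset.range N,
      P.real (⋂ j ∈ Finset.range N \ {i}, X j ⁻¹' (C y)ᶜ) ≤ (1 - q) ^ (N - 1) := by
    intro y hy i hi
    rw [hindep.measureReal_biInter_preimage_eq_pow hX hdist _ (hC y).compl,
      Finset.card_sdiff_of_subset (Finset.singleton_subset_iff.2 hi), Finset.card_range,
      Finset.card_singleton, probReal_compl_eq_one_sub (hC y)]
    exact pow_le_pow_left₀ (by simp) (by linarith [hq y hy]) _
  calc _ ≤ ∑ y ∈ T, ∑ i ∈ Finset.range N, P.real (⋂ j ∈ Finset.range N \ {i}, X j ⁻¹' (C y)ᶜ) :=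
        (measureReal_biUnion_finset_le _ _).trans
          (Finset.sum_le_sum fun _ _ => measureReal_biUnion_finset_le _ _)
    _ ≤ ∑ y ∈ T, ∑ i ∈ Finset.range N, (1 - q) ^ (N - 1) :=
        Finset.sum_le_sum fun y hy => Finset.sum_le_sum fun i hi => hmiss y hy i hi
    _ = T.card * N * (1 - q) ^ (N - 1) := by simp [mul_assoc]

end Sampling

section SphereSamples

variable {Ω : Type*} [MeasurableSpace Ω] {P : Measure Ω} {X : ℕ → Ω → E3}

lemma ae_forall_mem_S2 (hX : ∀ i, AEMeasurable (X i) P)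
    (hdist : ∀ i, P.map (X i) = sphereUniform) : ∀ᵐ ω ∂P, ∀ i, X i ω ∈ S2 :=
  ae_all_iff.2 fun i => ae_of_ae_map (hX i) ((hdist i).symm ▸ sphereUniform_ae_mem_S2)

lemma measureReal_exists_isolated_le [IsProbabilityMeasure P] (hindep : iIndepFun X P)
    (hX : ∀ i, AEMeasurable (X i) P) (hdist : ∀ i, P.map (X i) = sphereUniform) {p : ℝ}
    (hp0 : 0 < p) (hp1 : p ≤ 1) (N : ℕ) :
    P.real {ω | ∃ i < N, ∀ j < N, j ≠ i → 2 * √p < dist (X i ω) (X j ω)}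
      ≤ 32 / p * N * (1 - p / 32) ^ (N - 1) := by
  have : IsProbabilityMeasure sphereUniform := hdist 0 ▸ Measure.isProbabilityMeasure_map (hX 0)
  have hs0 : 0 < √p := sqrt_pos.2 hp0
  have hs1 : √p ≤ 1 := sqrt_le_one.2 hp1
  have hsq : √p ^ 2 = p := sq_sqrt hp0.le
  obtain ⟨T, hTS, hcover, hcard⟩ := exists_finset_cover_S2 hs0 hs1
  have hsub : {ω | ∃ i < N, ∀ j < N, j ≠ i → 2 * √p < dist (X i ω) (X j ω)}
      ≤ᵐ[P] ⋃ y ∈ T, ⋃ i ∈ Finset.range N,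
        ⋂ j ∈ Finset.range N \ {i}, X j ⁻¹' (closedBall y √p)ᶜ := by
    filter_upwards [ae_forall_mem_S2 hX hdist] with ω hω ⟨i, hi, hiso⟩
    obtain ⟨y, hy, hiy⟩ := mem_iUnion₂.1 (hcover (hω i))
    refine mem_iUnion₂.2 ⟨y, hy, mem_iUnion₂.2 ⟨i, Finset.mem_range.2 hi,
      mem_iInter₂.2 fun j hj hjy => ?_⟩⟩
    obtain ⟨hj, hji⟩ : j < N ∧ j ≠ i := by simpa using hj
    refine (hiso j hj hji).not_ge ?_
    linarith [dist_triangle (X i ω) y (X j ω), mem_closedBall.1 hiy, mem_closedBall'.1 hjy]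
  have hq : ∀ y ∈ T, p / 32 ≤ sphereUniform.real (closedBall y √p) := fun y hy => by
    simpa only [hsq] using le_sphereUniform_real_closedBall hs0 hs1 (hTS hy)
  calc _ ≤ _ := ENNReal.toReal_mono (measure_ne_top _ _) (measure_mono_ae hsub)
    _ ≤ T.card * N * (1 - p / 32) ^ (N - 1) :=
      measureReal_exists_all_but_one_notMem_le hindep hX hdist T (fun _ => measurableSet_closedBall)
        hq N
    _ ≤ 32 / p * N * (1 - p / 32) ^ (N - 1) := by
      gcongr
      · exact pow_nonneg (by linarith) _
      · rw [le_div_iff₀ hp0, ← hsq]; exact hcard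

end SphereSamples

lemma summable_rpow_mul_exp_neg_mul_rpow (k : ℝ) {b β : ℝ} (hb : 0 < b) (hβ : 0 < β) :
    Summable fun n : ℕ => (n : ℝ) ^ k * exp (-b * (n : ℝ) ^ β) := by
  have hlim : Tendsto (fun x : ℝ => x ^ (k + 2) * exp (-b * x ^ β)) atTop (𝓝 0) := by
    refine ((tendsto_rpow_mul_exp_neg_mul_atTop_nhds_zero ((k + 2) / β) b hb).comp
      (tendsto_rpow_atTop hβ)).congr' ?_
    filter_upwards [eventually_ge_atTop 0] with x hx
    simp [← rpow_mul hx, mul_div_cancel₀ _ hβ.ne']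
  have hO := ((hlim.comp tendsto_natCast_atTop_atTop).isBigO_one ℝ).mul
    (Asymptotics.isBigO_refl (fun n : ℕ => (n : ℝ) ^ (-2 : ℝ)) atTop)
  refine summable_of_isBigO_nat (summable_nat_rpow (p := -2).2 (by norm_num))
    (hO.congr' ?_ (.of_forall fun n => one_mul _))
  filter_upwards [eventually_gt_atTop 0] with n hn
  simp only [Function.comp_apply]
  rw [mul_right_comm, ← rpow_add (by exact_mod_cast hn), add_neg_cancel_right]

lemma one_sub_pow_pred_le_exp {q : ℝ} (hq0 : 0 ≤ q) (hq1 : q ≤ 1) {N : ℕ} (hN : 2 ≤ N) :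
    (1 - q) ^ (N - 1) ≤ exp (-(q * N / 2)) := calc
  (1 - q) ^ (N - 1) ≤ exp (-q) ^ (N - 1) :=
    pow_le_pow_left₀ (by linarith) (by linarith [add_one_le_exp (-q)]) _
  _ = exp (-(q * (N - 1 : ℕ))) := by rw [← exp_nat_mul]; ring_nf
  _ ≤ exp (-(q * N / 2)) := by
    gcongr
    have : (2 : ℝ) ≤ N := by exact_mod_cast hN
    rw [Nat.cast_sub (by omega)]
    nlinarith

lemma tendsto_const_div_natCast_rpow (c : ℝ) {α : ℝ} (hα : 0 < α) :
    Tendsto (fun N : ℕ => c / (N : ℝ) ^ α) atTop (𝓝 0) :=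
  tendsto_const_nhds.div_atTop ((tendsto_rpow_atTop hα).comp tendsto_natCast_atTop_atTop)

lemma summable_div_mul_one_sub_pow {c α : ℝ} (hc : 0 < c) (hα0 : 0 < α) (hα1 : α < 1) :
    Summable fun N : ℕ => 32 / (c / N ^ α) * N * (1 - c / N ^ α / 32) ^ (N - 1) := by
  refine ((summable_rpow_mul_exp_neg_mul_rpow (α + 1) (b := c / 64) (by positivity)
    (sub_pos.2 hα1)).mul_left (32 / c)).of_norm_bounded_eventually_nat ?_
  filter_upwards [(tendsto_const_div_natCast_rpow c hα0).eventually (ge_mem_nhds (by norm_num :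
    (0 : ℝ) < 32)), eventually_ge_atTop 2] with N hp hN
  have hN0 : (0 : ℝ) < N := by positivity
  have hp0 : 0 < c / (N : ℝ) ^ α := by positivity
  have hpow : 0 ≤ (1 - c / N ^ α / 32) ^ (N - 1) := pow_nonneg (by linarith) _
  rw [norm_of_nonneg (by positivity)]
  calc _ ≤ 32 / (c / N ^ α) * N * exp (-(c / N ^ α / 32 * N / 2)) := by
        gcongr
        exact one_sub_pow_pred_le_exp (by positivity) (by linarith) hN
    _ = 32 / c * ((N : ℝ) ^ (α + 1) * exp (-(c / 64) * (N : ℝ) ^ (1 - α))) := by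
        rw [rpow_add_one hN0.ne', rpow_sub hN0, rpow_one]
        field_simp
        ring_nf

lemma tsum_measure_ne_top_of_eventually_measureReal_le {Ω : Type*} [MeasurableSpace Ω]
    {P : Measure Ω} [IsFiniteMeasure P] {B : ℕ → Set Ω} {u : ℕ → ℝ} (hu : Summable u)
    (hB : ∀ᶠ n in atTop, P.real (B n) ≤ u n) : ∑' n, P (B n) ≠ ⊤ := by
  have hsum : Summable fun n => P.real (B n) :=
    hu.of_norm_bounded_eventually_nat
      (hB.mono fun n hn => by rwa [norm_of_nonneg measureReal_nonneg])
  have hofReal : ∑' n, P (B n) = ENNReal.ofReal (∑' n, P.real (B n)) := by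
    simp [ENNReal.ofReal_tsum_of_nonneg (fun _ => measureReal_nonneg) hsum]
  exact hofReal ▸ ENNReal.ofReal_ne_top

/-- Theorem 4.2 (first part): for `c > 0` and `0 < α < 1`, with `p_N = c/N^α` and cap radius
`a_N = 2·arcsin √p_N`, almost surely, for all sufficiently large `N`, the random
intersection graph `G_N` has at least `N/2` edges, i.e. `2·|𝓔_N| ≥ N`. -/
theorem at_least_half_N_edges_eventually
    (c α : ℝ) (hc : 0 < c) (hα : α ∈ Set.Ioo (0 : ℝ) 1)
    {Ω : Type*} [MeasurableSpace Ω] (P : Measure Ω) [IsProbabilityMeasure P]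
    (X : ℕ → Ω → EuclideanSpace ℝ (Fin 3))
    (hmeas : ∀ i, Measurable (X i))
    (hindep : ProbabilityTheory.iIndepFun X P)
    (hdist : ∀ i, Measure.map (X i) P = sphereUniform) :
    ∀ᵐ ω ∂P, ∀ᶠ N : ℕ in Filter.atTop,
      N ≤ 2 * Set.ncard {q : ℕ × ℕ | q.1 < q.2 ∧ q.2 < N ∧
        angDist (X q.1 ω) (X q.2 ω) ≤
          2 * (2 * Real.arcsin (Real.sqrt (c / (N : ℝ) ^ α)))} := by
  obtain ⟨hα0, hα1⟩ := hα
  have hX : ∀ i, AEMeasurable (X i) P := fun i => (hmeas i).aemeasurable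
  have hp : ∀ᶠ N : ℕ in atTop, 0 < c / (N : ℝ) ^ α ∧ c / (N : ℝ) ^ α ≤ 1 := by
    filter_upwards [(tendsto_const_div_natCast_rpow c hα0).eventually (ge_mem_nhds one_pos),
      eventually_gt_atTop 0] with N hp1 hN
    exact ⟨by positivity, hp1⟩
  have hrare : ∀ᵐ ω ∂P, ∀ᶠ N : ℕ in atTop, ω ∉ {ω | ∃ i < N, ∀ j < N, j ≠ i →
      2 * √(c / (N : ℝ) ^ α) < dist (X i ω) (X j ω)} :=
    ae_eventually_notMem <| tsum_measure_ne_top_of_eventually_measureReal_le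
      (summable_div_mul_one_sub_pow hc hα0 hα1)
      (hp.mono fun N hN => measureReal_exists_isolated_le hindep hX hdist hN.1 hN.2 N)
  filter_upwards [hrare, ae_forall_mem_S2 hX hdist] with ω hω hS2
  filter_upwards [hω] with N hN
  refine le_two_mul_ncard_of_forall_exists_ne (R := fun i j => angDist (X i ω) (X j ω) ≤ _)
    (fun i j h => (angDist_comm _ _).trans_le h) fun i hi => ?_
  push Not at hN
  obtain ⟨j, hj, hji, hd⟩ := hN i hi
  refine ⟨j, hj, hji, (arccos_inner_le_two_mul_arcsin (mem_sphere_zero_iff_norm.1 (hS2 i))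
    (mem_sphere_zero_iff_norm.1 (hS2 j)) hd).trans ?_⟩
  linarith [arcsin_nonneg.2 (sqrt_nonneg (c / (N : ℝ) ^ α))]
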